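/- Let a_{α,0} = 2Γ(2α)cos(πα)/(Γ(α)²cos(πα/2)²). For every fixed x ∈ ℝ, the function a_{α,0}·(C̃_{1−α}(x) − C̃_{2+(1+α)²/2}(x)) converges pointwise to (2/π²)·C̃₂^{(1)}(x) as α → −1⁺. Moreover, for every α ∈ (−1, −3/4) and every x ∈ ℝ, one has a_{α,0}·(C̃_{1−α}(x) − C̃_{2+(1+α)²/2}(x)) ≥ (2/π²)·C̃₂^{(1)}(x). -/

import Mathlib

open scoped Real Topology
open Set Filter

/-- The normalized Clausen function `C̃_s(x) = ∑_{n ≥ 1} (cos (n x) - 1)/n^s`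
(absolutely convergent for `s > 1`). -/
noncomputable def Ct (s x : ℝ) : ℝ :=
  ∑' n : ℕ, (Real.cos (((n : ℝ) + 1) * x) - 1) / ((n : ℝ) + 1) ^ s

/-- `C̃₂^{(1)}(x)`, the derivative in `s` at `s = 2` of `s ↦ C̃_s(x)`, explicitly
`-∑_{n ≥ 1} (cos (n x) - 1)·log n / n²`. -/
noncomputable def CtDeriv2 (x : ℝ) : ℝ :=
  -∑' n : ℕ, (Real.cos (((n : ℝ) + 1) * x) - 1) * Real.log ((n : ℝ) + 1) / ((n : ℝ) + 1) ^ 2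

/-- The coefficient `a_{α,0} = 2Γ(2α)cos(πα)/(Γ(α)²cos(πα/2)²)`. -/
noncomputable def aCoeff (α : ℝ) : ℝ :=
  2 * Real.Gamma (2*α) * Real.cos (π * α) /
    (Real.Gamma α ^ 2 * Real.cos (π * α / 2) ^ 2)

/-!
Put `ε = 1 + α`. Then `a_{α,0} (C̃_{1-α} - C̃_{2+ε²/2})` factors as `(-ε a_{α,0}) · D(ε)/ε` with
`D(ε) = C̃_{2+ε²/2} - C̃_{2-ε} = ∑ (1 - cos nx) n⁻² (n^ε - n^{-ε²/2})`, a series with nonnegative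
weights. Termwise, `eᵘ ≥ 1 + u` gives `D(ε) ≥ ε C̃₂⁽¹⁾(x)`, and `eᵘ - 1 - u ≤ u² eᵘ` gives
`D(ε) ≤ ε C̃₂⁽¹⁾(x) + O(ε²)`. The recurrence of `Γ` turns `-ε a_{α,0}` into
`(2/π²) Γ(1+2ε) cos(πε) (1-ε) / ((1-2ε) Γ(1+ε)² sinc²(πε/2))`, which is continuous at `ε = 0`
with value `2/π²`, and is at least `2/π²` for `ε < 1/4` by log-convexity of `Γ`.
-/

open Real

lemma summable_log_pow_mul_rpow_neg (k : ℕ) {s : ℝ} (hs : 1 < s) :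
    Summable fun n : ℕ => log ((n : ℝ) + 1) ^ k * ((n : ℝ) + 1) ^ (-s) := by
  have hlog : (fun x : ℝ => log x ^ k) =O[atTop] fun x => x ^ ((s - 1) / 2) := by
    simpa only [rpow_natCast] using
      (isLittleO_log_rpow_rpow_atTop (k : ℝ) (by linarith : 0 < (s - 1) / 2)).isBigO
  have hO : (fun x : ℝ => log x ^ k * x ^ (-s)) =O[atTop] fun x => x ^ (-((s + 1) / 2)) := by
    refine (hlog.mul (Asymptotics.isBigO_refl (fun x : ℝ => x ^ (-s)) _)).congr' .rfl ?_
    filter_upwards [eventually_gt_atTop 0] with x hx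
    rw [← rpow_add hx]; ring_nf
  have hsum : Summable fun n : ℕ => log (n : ℝ) ^ k * (n : ℝ) ^ (-s) :=
    summable_of_isBigO_nat (summable_nat_rpow.mpr (by linarith))
      (hO.comp_tendsto tendsto_natCast_atTop_atTop)
  exact_mod_cast (summable_nat_add_iff 1).mpr hsum

lemma summable_one_sub_cos_mul (x : ℝ) {f : ℕ → ℝ} (hf : Summable f) (hf0 : ∀ n, 0 ≤ f n) :
    Summable fun n : ℕ => (1 - cos (((n : ℝ) + 1) * x)) * f n :=
  Summable.of_nonneg_of_le (fun n => mul_nonneg (sub_nonneg.2 (cos_le_one _)) (hf0 n))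
    (fun n => mul_le_mul_of_nonneg_right (by linarith [neg_one_le_cos (((n : ℝ) + 1) * x)])
      (hf0 n)) (hf.mul_left 2)

lemma summable_one_sub_cos_mul_rpow_neg (x : ℝ) {s : ℝ} (hs : 1 < s) :
    Summable fun n : ℕ => (1 - cos (((n : ℝ) + 1) * x)) * ((n : ℝ) + 1) ^ (-s) :=
  summable_one_sub_cos_mul x (by simpa using summable_log_pow_mul_rpow_neg 0 hs)
    fun n => by positivity

lemma Ct_eq_neg_tsum (s x : ℝ) :
    Ct s x = -∑' n : ℕ, (1 - cos (((n : ℝ) + 1) * x)) * ((n : ℝ) + 1) ^ (-s) := by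
  rw [Ct, ← tsum_neg]
  congr 1 with n
  rw [rpow_neg (by positivity), div_eq_mul_inv]
  ring

lemma summable_Ct_sub_Ct_terms (x : ℝ) {s₁ s₂ : ℝ} (h₁ : 1 < s₁) (h₂ : 1 < s₂) :
    Summable fun n : ℕ => (1 - cos (((n : ℝ) + 1) * x)) *
      (((n : ℝ) + 1) ^ (-s₁) - ((n : ℝ) + 1) ^ (-s₂)) :=
  ((summable_one_sub_cos_mul_rpow_neg x h₁).sub (summable_one_sub_cos_mul_rpow_neg x h₂)).congr
    fun _ => (mul_sub _ _ _).symm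

lemma Ct_sub_Ct_eq_tsum (x : ℝ) {s₁ s₂ : ℝ} (h₁ : 1 < s₁) (h₂ : 1 < s₂) :
    Ct s₂ x - Ct s₁ x = ∑' n : ℕ, (1 - cos (((n : ℝ) + 1) * x)) *
      (((n : ℝ) + 1) ^ (-s₁) - ((n : ℝ) + 1) ^ (-s₂)) := by
  simp_rw [Ct_eq_neg_tsum, mul_sub]
  rw [Summable.tsum_sub (summable_one_sub_cos_mul_rpow_neg x h₁)
    (summable_one_sub_cos_mul_rpow_neg x h₂)]
  ring

lemma CtDeriv2_eq_tsum (x : ℝ) :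
    CtDeriv2 x = ∑' n : ℕ, (1 - cos (((n : ℝ) + 1) * x)) *
      (log ((n : ℝ) + 1) * ((n : ℝ) + 1) ^ (-2 : ℝ)) := by
  rw [CtDeriv2, ← tsum_neg]
  congr 1 with n
  rw [rpow_neg (by positivity), rpow_two, div_eq_mul_inv]
  ring

lemma summable_CtDeriv2_terms (x : ℝ) :
    Summable fun n : ℕ => (1 - cos (((n : ℝ) + 1) * x)) *
      (log ((n : ℝ) + 1) * ((n : ℝ) + 1) ^ (-2 : ℝ)) :=
  summable_one_sub_cos_mul x (by simpa using summable_log_pow_mul_rpow_neg 1 one_lt_two)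
    fun _ => mul_nonneg (log_nonneg (by simp)) (by positivity)

lemma CtDeriv2_nonneg (x : ℝ) : 0 ≤ CtDeriv2 x := by
  rw [CtDeriv2_eq_tsum]
  exact tsum_nonneg fun n => mul_nonneg (sub_nonneg.2 (cos_le_one _))
    (mul_nonneg (log_nonneg (by simp)) (by positivity))

lemma exp_sub_one_sub_le_sq_mul_exp {u : ℝ} (hu : 0 ≤ u) : exp u - 1 - u ≤ u ^ 2 * exp u := by
  have h : exp u - 1 ≤ u * exp u := by
    have := mul_le_mul_of_nonneg_right (one_sub_le_exp_neg u) (exp_pos u).le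
    rw [← exp_add, neg_add_cancel, exp_zero] at this
    linarith
  nlinarith [mul_le_mul_of_nonneg_left h hu]

lemma rpow_neg_two_sub_eq {m : ℝ} (hm : 1 ≤ m) (ε : ℝ) :
    m ^ (-(2 - ε)) = exp (log m * ε) * m ^ (-2 : ℝ) := by
  rw [← rpow_def_of_pos (by linarith), ← rpow_add (by linarith)]; ring_nf

lemma rpow_neg_two_add_eq {m : ℝ} (hm : 1 ≤ m) (ε : ℝ) :
    m ^ (-(2 + ε ^ 2 / 2)) = exp (log m * -(ε ^ 2 / 2)) * m ^ (-2 : ℝ) := by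
  rw [← rpow_def_of_pos (by linarith), ← rpow_add (by linarith)]; ring_nf

lemma mul_log_mul_rpow_le_rpow_sub_rpow {m : ℝ} (hm : 1 ≤ m) (ε : ℝ) :
    ε * (log m * m ^ (-2 : ℝ)) ≤ m ^ (-(2 - ε)) - m ^ (-(2 + ε ^ 2 / 2)) := by
  have h₁ := add_one_le_exp (log m * ε)
  have h₂ : exp (log m * -(ε ^ 2 / 2)) ≤ 1 :=
    exp_le_one_iff.mpr (mul_nonpos_of_nonneg_of_nonpos (log_nonneg hm) (by nlinarith))
  have hP : 0 ≤ m ^ (-2 : ℝ) := by positivity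
  rw [rpow_neg_two_sub_eq hm, rpow_neg_two_add_eq hm]
  nlinarith

lemma rpow_sub_rpow_sub_mul_log_mul_rpow_le {m : ℝ} (hm : 1 ≤ m) {ε : ℝ} (hε : 0 ≤ ε) :
    m ^ (-(2 - ε)) - m ^ (-(2 + ε ^ 2 / 2)) - ε * (log m * m ^ (-2 : ℝ)) ≤
      ε ^ 2 * (log m ^ 2 * m ^ (-(2 - ε)) + log m * m ^ (-2 : ℝ) / 2) := by
  have h₁ := exp_sub_one_sub_le_sq_mul_exp (mul_nonneg (log_nonneg hm) hε)
  have h₂ := add_one_le_exp (log m * -(ε ^ 2 / 2))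
  have hP : 0 ≤ m ^ (-2 : ℝ) := by positivity
  rw [rpow_neg_two_sub_eq hm, rpow_neg_two_add_eq hm]
  nlinarith

lemma one_lt_two_add_sq_div_two (ε : ℝ) : 1 < 2 + ε ^ 2 / 2 := by nlinarith [sq_nonneg ε]

lemma mul_CtDeriv2_le_Ct_sub_Ct (x : ℝ) {ε : ℝ} (hε : ε < 1) :
    ε * CtDeriv2 x ≤ Ct (2 + ε ^ 2 / 2) x - Ct (2 - ε) x := by
  rw [Ct_sub_Ct_eq_tsum x (by linarith) (one_lt_two_add_sq_div_two ε), CtDeriv2_eq_tsum,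
    ← tsum_mul_left]
  refine Summable.tsum_le_tsum (fun n => ?_) ((summable_CtDeriv2_terms x).mul_left ε)
    (summable_Ct_sub_Ct_terms x (by linarith) (one_lt_two_add_sq_div_two ε))
  rw [mul_left_comm]
  exact mul_le_mul_of_nonneg_left
    (mul_log_mul_rpow_le_rpow_sub_rpow (by simp) ε) (sub_nonneg.2 (cos_le_one _))

lemma exists_Ct_sub_Ct_sub_mul_CtDeriv2_le (x : ℝ) : ∃ C, ∀ ε ∈ Icc (0 : ℝ) (1 / 4),
    Ct (2 + ε ^ 2 / 2) x - Ct (2 - ε) x - ε * CtDeriv2 x ≤ ε ^ 2 * C := by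
  -- `7/4 = 2 - 1/4`: for `ε ≤ 1/4`, `m^(ε-2) ≤ m^(-7/4)` bounds the `log²` term uniformly in `ε`.
  set F : ℕ → ℝ := fun n => (1 - cos (((n : ℝ) + 1) * x)) *
      (log ((n : ℝ) + 1) ^ 2 * ((n : ℝ) + 1) ^ (-(7 / 4 : ℝ)) +
        log ((n : ℝ) + 1) * ((n : ℝ) + 1) ^ (-2 : ℝ) / 2)
  have hsum : Summable F :=
    summable_one_sub_cos_mul x
      ((summable_log_pow_mul_rpow_neg 2 (by norm_num)).add
        ((summable_log_pow_mul_rpow_neg 1 one_lt_two).div_const 2 |>.congr fun n => by simp))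
      fun n => by have := log_nonneg (show (1 : ℝ) ≤ n + 1 by simp); positivity
  refine ⟨∑' n, F n, fun ε ⟨hε₀, hε₁⟩ => ?_⟩
  rw [Ct_sub_Ct_eq_tsum x (by linarith) (one_lt_two_add_sq_div_two ε), CtDeriv2_eq_tsum,
    ← tsum_mul_left, ← tsum_mul_left, ← Summable.tsum_sub
      (summable_Ct_sub_Ct_terms x (by linarith) (one_lt_two_add_sq_div_two ε))
      ((summable_CtDeriv2_terms x).mul_left ε)]
  refine Summable.tsum_le_tsum (fun n => ?_)
    ((summable_Ct_sub_Ct_terms x (by linarith) (one_lt_two_add_sq_div_two ε)).sub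
      ((summable_CtDeriv2_terms x).mul_left ε)) (hsum.mul_left _)
  have hm : (1 : ℝ) ≤ n + 1 := by simp
  have hpow : ((n : ℝ) + 1) ^ (-(2 - ε)) ≤ ((n : ℝ) + 1) ^ (-(7 / 4 : ℝ)) :=
    rpow_le_rpow_of_exponent_le hm (by linarith)
  have hterm := rpow_sub_rpow_sub_mul_log_mul_rpow_le hm hε₀
  have hc := sub_nonneg.2 (cos_le_one (((n : ℝ) + 1) * x))
  have hlog := log_nonneg hm
  have : log ((n : ℝ) + 1) ^ 2 * ((n : ℝ) + 1) ^ (-(2 - ε)) ≤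
      log ((n : ℝ) + 1) ^ 2 * ((n : ℝ) + 1) ^ (-(7 / 4 : ℝ)) :=
    mul_le_mul_of_nonneg_left hpow (by positivity)
  simp only [F]
  nlinarith [mul_le_mul_of_nonneg_left hterm hc, mul_le_mul_of_nonneg_left this
    (mul_nonneg hc (sq_nonneg ε))]

lemma tendsto_Ct_sub_Ct_div (x : ℝ) :
    Tendsto (fun ε => (Ct (2 + ε ^ 2 / 2) x - Ct (2 - ε) x) / ε) (𝓝[>] 0) (𝓝 (CtDeriv2 x)) := by
  obtain ⟨C, hC⟩ := exists_Ct_sub_Ct_sub_mul_CtDeriv2_le x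
  have hupper : Tendsto (fun ε => CtDeriv2 x + ε * C) (𝓝[>] 0) (𝓝 (CtDeriv2 x)) := by
    have hcont : Continuous fun ε : ℝ => CtDeriv2 x + ε * C := by fun_prop
    simpa using (hcont.tendsto 0).mono_left nhdsWithin_le_nhds
  refine tendsto_of_tendsto_of_tendsto_of_le_of_le' tendsto_const_nhds hupper ?_ ?_ <;>
    filter_upwards [Ioo_mem_nhdsGT (show (0 : ℝ) < 1 / 4 by norm_num)] with ε ⟨hε₀, hε₁⟩
  · rw [le_div_iff₀ hε₀, mul_comm]
    exact mul_CtDeriv2_le_Ct_sub_Ct x (by linarith)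
  · rw [div_le_iff₀ hε₀]
    nlinarith [hC ε ⟨hε₀.le, hε₁.le⟩]

lemma Gamma_add_div_two_sq_le {s t : ℝ} (hs : 0 < s) (ht : 0 < t) :
    Gamma ((s + t) / 2) ^ 2 ≤ Gamma s * Gamma t := by
  have h := Gamma_mul_add_mul_le_rpow_Gamma_mul_rpow_Gamma (a := 1 / 2) (b := 1 / 2) hs ht
    (by norm_num) (by norm_num) (by norm_num)
  rw [show 1 / 2 * s + 1 / 2 * t = (s + t) / 2 by ring,
    ← mul_rpow (Gamma_pos_of_pos hs).le (Gamma_pos_of_pos ht).le, ← sqrt_eq_rpow] at h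
  calc Gamma ((s + t) / 2) ^ 2 ≤ √(Gamma s * Gamma t) ^ 2 :=
        pow_le_pow_left₀ (Gamma_pos_of_pos (by positivity)).le h 2
    _ = Gamma s * Gamma t := sq_sqrt (mul_nonneg (Gamma_pos_of_pos hs).le (Gamma_pos_of_pos ht).le)

lemma one_sub_two_mul_le_cos_pi_mul_mul_one_sub {ε : ℝ} (h₀ : 0 ≤ ε) (h₁ : ε ≤ 1 / 4) :
    1 - 2 * ε ≤ cos (π * ε) * (1 - ε) := by
  have hcos := one_sub_sq_div_two_le_cos (x := π * ε)
  have hπ := pi_lt_d2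
  have hπ₀ := pi_pos
  have hε : ε * (1 - ε) ≤ 3 / 16 := by nlinarith
  have hπ2 : π ^ 2 ≤ 10 := by nlinarith
  have h₂ : π ^ 2 * ε * (1 - ε) ≤ 2 := by
    nlinarith [mul_le_mul hπ2 hε (by nlinarith) (by norm_num)]
  nlinarith [mul_le_mul_of_nonneg_right hcos (by linarith : (0 : ℝ) ≤ 1 - ε),
    mul_le_mul_of_nonneg_left h₂ h₀]

lemma neg_aCoeff_sub_one_mul_eq {ε : ℝ} (h₀ : 0 < ε) (h₁ : ε < 1 / 2) :
    -aCoeff (ε - 1) * ε = 2 / π ^ 2 * (Gamma (1 + 2 * ε) * cos (π * ε) * (1 - ε) /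
      ((1 - 2 * ε) * Gamma (1 + ε) ^ 2 * sinc (π * ε / 2) ^ 2)) := by
  have hΓ₂ : Gamma (1 + 2 * ε) = 2 * ε * (2 * ε - 1) * (2 * ε - 2) * Gamma (2 * (ε - 1)) := by
    rw [show 1 + 2 * ε = 2 * (ε - 1) + 1 + 1 + 1 by ring, Gamma_add_one, Gamma_add_one,
      Gamma_add_one] <;> first | (intro h; linarith) | ring
  have hΓ₁ : Gamma (1 + ε) = ε * (ε - 1) * Gamma (ε - 1) := by
    rw [show 1 + ε = ε - 1 + 1 + 1 by ring, Gamma_add_one, Gamma_add_one] <;>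
      first | (intro h; linarith) | ring
  have hsin : 0 < sin (π * ε / 2) := sin_pos_of_pos_of_lt_pi (by positivity) (by nlinarith [pi_pos])
  have hΓ₂₀ : Gamma (2 * (ε - 1)) ≠ 0 := by
    intro h; have := Gamma_pos_of_pos (show 0 < 1 + 2 * ε by linarith); simp_all
  have hΓ₁₀ : Gamma (ε - 1) ≠ 0 := by
    intro h; have := Gamma_pos_of_pos (show 0 < 1 + ε by linarith); simp_all
  rw [aCoeff, show π * (ε - 1) = π * ε - π by ring, cos_sub_pi,
    show (π * ε - π) / 2 = π * ε / 2 - π / 2 by ring, cos_sub_pi_div_two,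
    sinc_of_ne_zero (by positivity), hΓ₂, hΓ₁]
  have : 2 * ε - 1 ≠ 0 := by linarith
  have : 2 * ε - 2 ≠ 0 := by linarith
  have : ε - 1 ≠ 0 := by linarith
  have : 1 - 2 * ε ≠ 0 := by linarith
  have : 1 - ε ≠ 0 := by linarith
  have := pi_pos.ne'
  have := hsin.ne'
  field_simp
  ring

lemma tendsto_neg_aCoeff_sub_one_mul :
    Tendsto (fun ε => -aCoeff (ε - 1) * ε) (𝓝[>] 0) (𝓝 (2 / π ^ 2)) := by
  have hΓ : ContinuousAt Gamma 1 := (differentiableAt_Gamma fun m h => by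
    linarith [(Nat.cast_nonneg m : (0 : ℝ) ≤ m)]).continuousAt
  have hΓ₂ : ContinuousAt (fun ε : ℝ => Gamma (1 + 2 * ε)) 0 :=
    show ContinuousAt (Gamma ∘ fun ε : ℝ => 1 + 2 * ε) 0 from hΓ.comp_of_eq (by fun_prop) (by simp)
  have hΓ₁ : ContinuousAt (fun ε : ℝ => Gamma (1 + ε)) 0 :=
    show ContinuousAt (Gamma ∘ fun ε : ℝ => 1 + ε) 0 from hΓ.comp_of_eq (by fun_prop) (by simp)
  have hcont : ContinuousAt (fun ε : ℝ => 2 / π ^ 2 * (Gamma (1 + 2 * ε) * cos (π * ε) * (1 - ε) /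
      ((1 - 2 * ε) * Gamma (1 + ε) ^ 2 * sinc (π * ε / 2) ^ 2))) 0 :=
    continuousAt_const.mul ((hΓ₂.mul (by fun_prop)).mul (by fun_prop) |>.div
      ((continuousAt_const.sub (by fun_prop)).mul (hΓ₁.pow 2) |>.mul
        ((continuous_sinc.comp (by fun_prop)).continuousAt.pow 2)) (by simp))
  refine ((by simpa using hcont.tendsto.mono_left nhdsWithin_le_nhds) : Tendsto _ _ _).congr' ?_
  filter_upwards [Ioo_mem_nhdsGT (show (0 : ℝ) < 1 / 2 by norm_num)] with ε ⟨h₀, h₁⟩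
  exact (neg_aCoeff_sub_one_mul_eq h₀ h₁).symm

lemma two_div_pi_sq_le_neg_aCoeff_sub_one_mul {ε : ℝ} (h₀ : 0 < ε) (h₁ : ε < 1 / 4) :
    2 / π ^ 2 ≤ -aCoeff (ε - 1) * ε := by
  have hsinc : 0 < sinc (π * ε / 2) := by
    rw [sinc_of_ne_zero (by positivity)]
    exact div_pos (sin_pos_of_pos_of_lt_pi (by positivity) (by nlinarith [pi_pos])) (by positivity)
  have hΓ : Gamma (1 + ε) ^ 2 ≤ Gamma (1 + 2 * ε) := by
    simpa [show (1 + (1 + 2 * ε)) / 2 = 1 + ε by ring] using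
      Gamma_add_div_two_sq_le one_pos (show 0 < 1 + 2 * ε by linarith)
  have hc := one_sub_two_mul_le_cos_pi_mul_mul_one_sub h₀.le h₁.le
  rw [neg_aCoeff_sub_one_mul_eq h₀ (by linarith)]
  refine le_mul_of_one_le_right (by positivity) ((one_le_div (by
    have : 0 < 1 - 2 * ε := by linarith
    have := Gamma_pos_of_pos (show 0 < 1 + ε by linarith)
    positivity)).mpr ?_)
  calc (1 - 2 * ε) * Gamma (1 + ε) ^ 2 * sinc (π * ε / 2) ^ 2
      ≤ (1 - 2 * ε) * Gamma (1 + ε) ^ 2 :=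
        mul_le_of_le_one_right (mul_nonneg (by linarith) (sq_nonneg _))
          (pow_le_one₀ hsinc.le (sinc_le_one _))
    _ ≤ cos (π * ε) * (1 - ε) * Gamma (1 + 2 * ε) :=
        mul_le_mul hc hΓ (sq_nonneg _) (by linarith)
    _ = Gamma (1 + 2 * ε) * cos (π * ε) * (1 - ε) := by ring

lemma aCoeff_mul_Ct_sub_Ct_eq (x : ℝ) {α : ℝ} (hα : -1 < α) :
    aCoeff α * (Ct (1 - α) x - Ct (2 + (1 + α) ^ 2 / 2) x) =
      (-aCoeff (1 + α - 1) * (1 + α)) *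
        ((Ct (2 + (1 + α) ^ 2 / 2) x - Ct (2 - (1 + α)) x) / (1 + α)) := by
  have : 1 + α ≠ 0 := by linarith
  rw [add_sub_cancel_left, show 2 - (1 + α) = 1 - α by ring]
  field_simp
  ring

/-- Pointwise convergence of `a_{α,0}(C̃_{1-α}(x) - C̃_{2+(1+α)²/2}(x))` to
`(2/π²)·C̃₂^{(1)}(x)` as `α → -1⁺`, together with the lower bound for `α ∈ (-1, -3/4)`. -/
theorem aCoeff_clausen_diff_limit_and_bound :
    (∀ x : ℝ,
      Tendsto (fun α : ℝ => aCoeff α * (Ct (1 - α) x - Ct (2 + (1 + α)^2 / 2) x))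
        (𝓝[>] (-1 : ℝ)) (𝓝 (2 / π ^ 2 * CtDeriv2 x))) ∧
    (∀ α ∈ Set.Ioo (-1 : ℝ) (-3/4), ∀ x : ℝ,
      2 / π ^ 2 * CtDeriv2 x ≤ aCoeff α * (Ct (1 - α) x - Ct (2 + (1 + α)^2 / 2) x)) := by
  refine ⟨fun x => ?_, fun α ⟨h₁, h₂⟩ x => ?_⟩
  · have hshift : Tendsto (fun α : ℝ => 1 + α) (𝓝[>] (-1)) (𝓝[>] 0) := by
      have := (map_add_left_nhdsGT (c := (1 : ℝ)) (a := -1)).le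
      rwa [add_neg_cancel] at this
    refine ((tendsto_neg_aCoeff_sub_one_mul.mul (tendsto_Ct_sub_Ct_div x)).comp hshift).congr' ?_
    filter_upwards [self_mem_nhdsWithin] with α hα
    exact (aCoeff_mul_Ct_sub_Ct_eq x hα).symm
  · have hε₀ : 0 < 1 + α := by linarith
    have hcoeff := two_div_pi_sq_le_neg_aCoeff_sub_one_mul hε₀ (by linarith)
    rw [aCoeff_mul_Ct_sub_Ct_eq x h₁]
    exact mul_le_mul hcoeff ((le_div_iff₀ hε₀).mpr (by
      simpa [mul_comm] using mul_CtDeriv2_le_Ct_sub_Ct x (by linarith : 1 + α < 1)))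
      (CtDeriv2_nonneg x) ((by positivity : (0 : ℝ) ≤ 2 / π ^ 2).trans hcoeff)
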